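/- arXiv:2603.04629 — 2 statements merged into one kernel-verified Lean document; each statement's English description precedes it below -/
import Mathlib

section
/- $QA_{\varphi,\psi}$ is complete: if $\{f_n\}_{n=1}^\infty\subset QA_{\varphi,\psi}$ is a Cauchy sequence with respect to the quasi-norm $\|\cdot\|_{\varphi,\psi}$, then there exists $f\in QA_{\varphi,\psi}$ such that $\|f_n-f\|_{\varphi,\psi}\to 0$ as $n\to\infty$. -/
open MeasureTheory ENNReal Set Filter Topology

noncomputable section

/-- Lebesgue measure restricted to the interval `[0,1]`. -/
def μ01 : Measure ℝ := volume.restrict (Set.Icc 0 1)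

/-- `φ : [0,1] → [0,∞)` is concave, non-decreasing, and vanishes only at the origin. -/
structure IsPhi (φ : ℝ → ℝ) : Prop where
  concave : ConcaveOn ℝ (Set.Icc 0 1) φ
  mono : MonotoneOn φ (Set.Icc 0 1)
  zero : φ 0 = 0
  pos : ∀ t : ℝ, 0 < t → t ≤ 1 → 0 < φ t

/-- `ψ : [0,∞) → [0,∞)` is concave, non-decreasing, and vanishes only at the origin. -/
structure IsPsi (ψ : ℝ → ℝ) : Prop where
  concave : ConcaveOn ℝ (Set.Ici 0) ψ
  mono : MonotoneOn ψ (Set.Ici 0)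
  zero : ψ 0 = 0
  pos : ∀ t : ℝ, 0 < t → 0 < ψ t

/-- A sequence `g` of nonnegative `L^∞` functions with `|f| ≤ ∑ₙ gₙ` a.e. -/
def Admissible (f : ℝ → ℝ) (g : ℕ → ℝ → ℝ) : Prop :=
  (∀ n, AEMeasurable (g n) μ01) ∧
  (∀ n, eLpNorm (g n) ⊤ μ01 < ⊤) ∧
  (∀ n x, 0 ≤ g n x) ∧
  (∀ᵐ x ∂μ01, ENNReal.ofReal |f x| ≤ ∑' n : ℕ, ENNReal.ofReal (g n x))

/-- The cost `∑ₙ ψ(n) ‖gₙ‖_∞ φ(‖gₙ‖₁/‖gₙ‖_∞)` of a decomposition (index shifted by 1;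
`0/0 = 0` by the `ℝ≥0∞` division convention, and `φ 0 = 0`). -/
def seqCost (φ ψ : ℝ → ℝ) (g : ℕ → ℝ → ℝ) : ℝ≥0∞ :=
  ∑' n : ℕ, ENNReal.ofReal
    (ψ ((n : ℝ) + 1) * (eLpNorm (g n) ⊤ μ01).toReal *
      φ ((eLpNorm (g n) 1 μ01 / eLpNorm (g n) ⊤ μ01).toReal))

/-- The quasi-norm `‖f‖_{φ,ψ}` (equal to `∞` when no admissible decomposition exists). -/
def QANorm (φ ψ : ℝ → ℝ) (f : ℝ → ℝ) : ℝ≥0∞ :=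
  ⨅ (g : ℕ → ℝ → ℝ) (_ : Admissible f g), seqCost φ ψ g

/-- Membership in the space `QA_{φ,ψ}`. -/
def MemQA (φ ψ : ℝ → ℝ) (f : ℝ → ℝ) : Prop :=
  AEMeasurable f μ01 ∧ QANorm φ ψ f < ⊤

/-- The decreasing rearrangement `f*` of `f` on `[0,1]`. -/
def decRearr (f : ℝ → ℝ) (t : ℝ) : ℝ :=
  sInf {s : ℝ | 0 ≤ s ∧ μ01 {x | s < |f x|} ≤ ENNReal.ofReal t}

/-- The limit `ζ(0⁺)` of a non-decreasing function `ζ` on `[0,1]`. -/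
def limZero (ζ : ℝ → ℝ) : ℝ := sInf (ζ '' Set.Ioc 0 1)

/-- The Lorentz norm `‖f‖_{Λ_ζ} = ∫₀¹ f* dζ = ‖f‖_∞ ζ(0⁺) + ∫₀¹ f*(s) ζ'(s) ds`
(for `ζ` concave the derivative exists a.e. and `ζ` is absolutely continuous on `(0,1]`). -/
def lorentzNorm (ζ : ℝ → ℝ) (f : ℝ → ℝ) : ℝ≥0∞ :=
  eLpNorm f ⊤ μ01 * ENNReal.ofReal (limZero ζ) +
    ∫⁻ s in Set.Ioc (0:ℝ) 1, ENNReal.ofReal (decRearr f s * deriv ζ s)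

/-- Membership in the Lorentz space `Λ_ζ`. -/
def MemLorentz (ζ : ℝ → ℝ) (f : ℝ → ℝ) : Prop :=
  AEMeasurable f μ01 ∧ lorentzNorm ζ f < ⊤

/-- The quasi-concave function `φ_s(t) = inf_n max{sₙ,t} (φ(sₙ)/sₙ) ψ(n)` (index shifted by 1). -/
def phiSeq (φ ψ : ℝ → ℝ) (s : ℕ → ℝ) (t : ℝ) : ℝ :=
  if t = 0 then 0 else ⨅ n : ℕ, max (s n) t * (φ (s n) / s n) * ψ ((n : ℝ) + 1)

/-- The function `τ(t) = φ(t) ψ(logbar(φ(t)/t))` with `logbar t = 1 + log⁺ t`. -/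
def tauF (φ ψ : ℝ → ℝ) (t : ℝ) : ℝ :=
  if t = 0 then 0 else φ t * ψ (1 + max (Real.log (φ t / t)) 0)


/-!
Two estimates drive the proof. First, `ψ(1) φ(1) ‖f‖₁ ≤ ‖f‖_{φ,ψ}`, because `φ(r) ≥ r φ(1)` and
`ψ(n) ≥ ψ(1)`; hence a Cauchy sequence for the quasi-norm is Cauchy in `L¹`, and a subsequence whose
consecutive distances decay fast converges a.e. to some `f`. Second, the countable quasi-triangle
inequality `‖h‖ ≤ ∑ₖ 2^(k+1) ‖Hₖ‖` whenever `|h| ≤ ∑ₖ |Hₖ|`: interleave near-optimal decompositions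
of the `Hₖ`, putting the `n`-th piece of `Hₖ` at position `2^k (2n+1)`, and use
`ψ(2^k (2n+1)) ≤ 2^(k+1) ψ(n+1)`, a consequence of the concavity of `ψ` and `ψ(0) = 0`. Applied to
the telescoping tails of the subsequence it shows that the subsequence converges to `f` in the
quasi-norm, and the Cauchy property passes this on to the whole sequence.
-/

lemma ConcaveOn.mul_le_apply_mul {s : Set ℝ} {f : ℝ → ℝ} (hf : ConcaveOn ℝ s f) (h0 : 0 ∈ s)
    (hf0 : 0 ≤ f 0) {x r : ℝ} (hx : x ∈ s) (hr0 : 0 ≤ r) (hr1 : r ≤ 1) :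
    r * f x ≤ f (r * x) := by
  have h := hf.2 hx h0 hr0 (sub_nonneg.2 hr1) (add_sub_cancel r 1)
  simp only [smul_eq_mul, mul_zero, add_zero] at h
  nlinarith [mul_nonneg (sub_nonneg.2 hr1) hf0]

variable {φ ψ : ℝ → ℝ}

lemma IsPhi.mul_apply_one_le (hφ : IsPhi φ) {r : ℝ} (hr0 : 0 ≤ r) (hr1 : r ≤ 1) :
    r * φ 1 ≤ φ r := by
  simpa using hφ.concave.mul_le_apply_mul ⟨le_rfl, zero_le_one⟩ hφ.zero.ge
    ⟨zero_le_one, le_rfl⟩ hr0 hr1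

lemma IsPsi.nonneg (hψ : IsPsi ψ) {t : ℝ} (ht : 0 ≤ t) : 0 ≤ ψ t :=
  hψ.zero ▸ hψ.mono (mem_Ici.2 le_rfl) (mem_Ici.2 ht) ht

lemma IsPsi.apply_mul_le (hψ : IsPsi ψ) {c t : ℝ} (hc : 1 ≤ c) (ht : 0 ≤ t) :
    ψ (c * t) ≤ c * ψ t := by
  have hc0 : 0 < c := one_pos.trans_le hc
  have h := hψ.concave.mul_le_apply_mul (mem_Ici.2 le_rfl) hψ.zero.ge
    (mem_Ici.2 (mul_nonneg hc0.le ht)) (inv_nonneg.2 hc0.le) (inv_le_one_of_one_le₀ hc)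
  rwa [inv_mul_cancel_left₀ hc0.ne', inv_mul_le_iff₀ hc0] at h

instance : IsProbabilityMeasure μ01 :=
  ⟨by simp [μ01]⟩

def phiNorm (φ : ℝ → ℝ) (u : ℝ → ℝ) : ℝ≥0∞ :=
  ENNReal.ofReal
    ((eLpNorm u ⊤ μ01).toReal * φ ((eLpNorm u 1 μ01 / eLpNorm u ⊤ μ01).toReal))

@[simp]
lemma phiNorm_zero : phiNorm φ 0 = 0 := by
  simp [phiNorm]

lemma seqCost_eq_tsum (hψ : IsPsi ψ) (g : ℕ → ℝ → ℝ) :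
    seqCost φ ψ g = ∑' n : ℕ, ENNReal.ofReal (ψ ((n : ℝ) + 1)) * phiNorm φ (g n) := by
  refine tsum_congr fun n => ?_
  rw [phiNorm, ← ENNReal.ofReal_mul (hψ.nonneg (by positivity)), mul_assoc]

lemma ofReal_mul_eLpNorm_one_le_phiNorm (hφ : IsPhi φ) {u : ℝ → ℝ}
    (hu : AEStronglyMeasurable u μ01) (hu_top : eLpNorm u ⊤ μ01 ≠ ⊤) :
    ENNReal.ofReal (φ 1) * eLpNorm u 1 μ01 ≤ phiNorm φ u := by
  have hLA : eLpNorm u 1 μ01 ≤ eLpNorm u ⊤ μ01 := eLpNorm_le_eLpNorm_of_exponent_le le_top hu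
  rw [phiNorm, ENNReal.toReal_div]
  set A := eLpNorm u ⊤ μ01
  set L := eLpNorm u 1 μ01
  rcases eq_or_ne A 0 with hA | hA
  · simp [le_zero_iff.1 (hA ▸ hLA)]
  have hA_pos : 0 < A.toReal := ENNReal.toReal_pos hA hu_top
  have hr1 : L.toReal / A.toReal ≤ 1 :=
    div_le_one_of_le₀ (ENNReal.toReal_mono hu_top hLA) hA_pos.le
  calc ENNReal.ofReal (φ 1) * L
      = ENNReal.ofReal (A.toReal * (L.toReal / A.toReal * φ 1)) := by
        have hL : L ≠ ⊤ := ne_top_of_le_ne_top hu_top hLA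
        rw [show A.toReal * (L.toReal / A.toReal * φ 1) = L.toReal * φ 1 by field_simp,
          ENNReal.ofReal_mul ENNReal.toReal_nonneg, ENNReal.ofReal_toReal hL, mul_comm]
    _ ≤ _ := ENNReal.ofReal_le_ofReal <| mul_le_mul_of_nonneg_left
        (hφ.mul_apply_one_le (by positivity) hr1) hA_pos.le

lemma eLpNorm_one_le_tsum_of_admissible {u : ℝ → ℝ} {g : ℕ → ℝ → ℝ} (hg : Admissible u g) :
    eLpNorm u 1 μ01 ≤ ∑' n, eLpNorm (g n) 1 μ01 := by
  simp only [eLpNorm_one_eq_lintegral_enorm, Real.enorm_eq_ofReal_abs]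
  calc ∫⁻ x, ENNReal.ofReal |u x| ∂μ01
      ≤ ∫⁻ x, ∑' n, ENNReal.ofReal (g n x) ∂μ01 := lintegral_mono_ae hg.2.2.2
    _ = ∑' n, ∫⁻ x, ENNReal.ofReal (g n x) ∂μ01 :=
        lintegral_tsum fun n => (hg.1 n).ennreal_ofReal
    _ = ∑' n, ∫⁻ x, ENNReal.ofReal |g n x| ∂μ01 := by
        simp_rw [abs_of_nonneg (hg.2.2.1 _ _)]

lemma ofReal_mul_eLpNorm_one_le_QANorm (hφ : IsPhi φ) (hψ : IsPsi ψ) (u : ℝ → ℝ) :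
    ENNReal.ofReal (ψ 1 * φ 1) * eLpNorm u 1 μ01 ≤ QANorm φ ψ u := by
  refine le_iInf₂ fun g hg => ?_
  calc ENNReal.ofReal (ψ 1 * φ 1) * eLpNorm u 1 μ01
      ≤ ∑' n, ENNReal.ofReal (ψ 1 * φ 1) * eLpNorm (g n) 1 μ01 := by
        rw [ENNReal.tsum_mul_left]
        gcongr
        exact eLpNorm_one_le_tsum_of_admissible hg
    _ ≤ ∑' n : ℕ, ENNReal.ofReal (ψ ((n : ℝ) + 1)) * phiNorm φ (g n) := by
        refine ENNReal.tsum_le_tsum fun n => ?_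
        rw [ENNReal.ofReal_mul (hψ.nonneg zero_le_one), mul_assoc]
        gcongr
        · exact hψ.mono (mem_Ici.2 zero_le_one) (mem_Ici.2 (by positivity)) (by simp)
        · exact ofReal_mul_eLpNorm_one_le_phiNorm hφ (hg.1 n).aestronglyMeasurable (hg.2.1 n).ne
    _ = seqCost φ ψ g := (seqCost_eq_tsum hψ g).symm

lemma eLpNorm_one_lt_of_QANorm_lt (hφ : IsPhi φ) (hψ : IsPsi ψ) {u : ℝ → ℝ} {ε : ℝ≥0∞}
    (hu : QANorm φ ψ u < ε) :
    eLpNorm u 1 μ01 < (ENNReal.ofReal (ψ 1 * φ 1))⁻¹ * ε := by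
  have hc : ENNReal.ofReal (ψ 1 * φ 1) ≠ 0 :=
    (ENNReal.ofReal_pos.2 (mul_pos (hψ.pos 1 one_pos) (hφ.pos 1 one_pos le_rfl))).ne'
  calc eLpNorm u 1 μ01
      = (ENNReal.ofReal (ψ 1 * φ 1))⁻¹ * (ENNReal.ofReal (ψ 1 * φ 1) * eLpNorm u 1 μ01) := by
        rw [← mul_assoc, ENNReal.inv_mul_cancel hc ENNReal.ofReal_ne_top, one_mul]
    _ ≤ (ENNReal.ofReal (ψ 1 * φ 1))⁻¹ * QANorm φ ψ u := by
        gcongr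
        exact ofReal_mul_eLpNorm_one_le_QANorm hφ hψ u
    _ < (ENNReal.ofReal (ψ 1 * φ 1))⁻¹ * ε :=
        ENNReal.mul_lt_mul_right (ENNReal.inv_ne_zero.2 ENNReal.ofReal_ne_top)
          (ENNReal.inv_ne_top.2 hc) hu

def dyadicEncode (p : ℕ × ℕ) : ℕ := 2 ^ p.1 * (2 * p.2 + 1) - 1

lemma dyadicEncode_add_one (p : ℕ × ℕ) : dyadicEncode p + 1 = 2 ^ p.1 * (2 * p.2 + 1) :=
  Nat.sub_add_cancel (Nat.one_le_iff_ne_zero.2 (by positivity))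

lemma dyadicEncode_injective : Function.Injective dyadicEncode := by
  rintro ⟨k, n⟩ ⟨j, m⟩ h
  have h' : 2 ^ k * (2 * n + 1) = 2 ^ j * (2 * m + 1) := by
    rw [← dyadicEncode_add_one (k, n), ← dyadicEncode_add_one (j, m), h]
  have hodd : ∀ i : ℕ, padicValNat 2 (2 * i + 1) = 0 := fun i =>
    padicValNat.eq_zero_of_not_dvd (by omega)
  have hkj : k = j := by
    simpa [padicValNat.mul, hodd] using congrArg (padicValNat 2) h'
  subst hkj
  have := Nat.eq_of_mul_eq_mul_left (by positivity) h'
  simp only [Prod.mk.injEq, true_and]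
  omega

lemma IsPsi.apply_dyadicEncode_add_one_le (hψ : IsPsi ψ) (k n : ℕ) :
    ψ ((dyadicEncode (k, n) : ℝ) + 1) ≤ 2 ^ (k + 1) * ψ ((n : ℝ) + 1) := by
  have hcast : (dyadicEncode (k, n) : ℝ) + 1 = 2 ^ k * (2 * n + 1) := by
    exact_mod_cast dyadicEncode_add_one (k, n)
  calc ψ ((dyadicEncode (k, n) : ℝ) + 1)
      ≤ ψ (2 ^ (k + 1) * ((n : ℝ) + 1)) := by
        rw [hcast]
        refine hψ.mono (mem_Ici.2 (by positivity)) (mem_Ici.2 (by positivity)) ?_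
        rw [pow_succ, mul_assoc]
        gcongr
        linarith
    _ ≤ 2 ^ (k + 1) * ψ ((n : ℝ) + 1) := hψ.apply_mul_le (one_le_pow₀ one_le_two) (by positivity)

section Merge

open Function

variable {e : ℕ × ℕ → ℕ} {g : ℕ → ℕ → ℝ → ℝ}

lemma extend_uncurry_cases (he : Injective e) (m : ℕ) :
    (∃ p : ℕ × ℕ, extend e (uncurry g) 0 m = g p.1 p.2) ∨ extend e (uncurry g) 0 m = 0 := by
  by_cases hm : ∃ p, e p = m
  · obtain ⟨p, rfl⟩ := hm
    exact .inl ⟨p, he.extend_apply _ _ _⟩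
  · exact .inr (extend_apply' _ _ _ hm)

lemma admissible_extend_uncurry (he : Injective e) {h : ℝ → ℝ} {H : ℕ → ℝ → ℝ}
    (hg : ∀ k, Admissible (H k) (g k))
    (hle : ∀ᵐ x ∂μ01, ENNReal.ofReal |h x| ≤ ∑' k, ENNReal.ofReal |H k x|) :
    Admissible h (extend e (uncurry g) 0) := by
  refine ⟨fun m => ?_, fun m => ?_, fun m x => ?_, ?_⟩
  · rcases extend_uncurry_cases he m with ⟨p, hp⟩ | hp <;> rw [hp]
    exacts [(hg p.1).1 p.2, aemeasurable_const]
  · rcases extend_uncurry_cases he m with ⟨p, hp⟩ | hp <;> rw [hp]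
    exacts [(hg p.1).2.1 p.2, by simp]
  · rcases extend_uncurry_cases he m with ⟨p, hp⟩ | hp <;> rw [hp]
    exacts [(hg p.1).2.2.1 p.2 x, le_rfl]
  · filter_upwards [hle, ae_all_iff.2 fun k => (hg k).2.2.2] with x hx hgx
    calc ENNReal.ofReal |h x|
        ≤ ∑' k, ∑' n, ENNReal.ofReal (g k n x) := hx.trans (ENNReal.tsum_le_tsum hgx)
      _ = ∑' p, ENNReal.ofReal (extend e (uncurry g) 0 (e p) x) := by
        simp [he.extend_apply, ENNReal.tsum_prod']
      _ ≤ ∑' m, ENNReal.ofReal (extend e (uncurry g) 0 m x) :=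
        ENNReal.tsum_comp_le_tsum_of_injective he _

lemma seqCost_extend_uncurry_le (hψ : IsPsi ψ) (he : Injective e) {w : ℕ → ℝ≥0∞}
    (hw : ∀ k n, ENNReal.ofReal (ψ ((e (k, n) : ℝ) + 1)) ≤ w k * ENNReal.ofReal (ψ ((n : ℝ) + 1))) :
    seqCost φ ψ (extend e (uncurry g) 0) ≤ ∑' k, w k * seqCost φ ψ (g k) := by
  have hsupp : support (fun m : ℕ => ENNReal.ofReal (ψ ((m : ℝ) + 1)) *
      phiNorm φ (extend e (uncurry g) 0 m)) ⊆ range e := by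
    intro m hm
    by_contra hm'
    exact hm (by simp [extend_apply' _ _ _ hm'])
  rw [seqCost_eq_tsum hψ, ← he.tsum_eq hsupp, ENNReal.tsum_prod']
  refine ENNReal.tsum_le_tsum fun k => ?_
  rw [seqCost_eq_tsum hψ, ← ENNReal.tsum_mul_left]
  refine ENNReal.tsum_le_tsum fun n => ?_
  rw [he.extend_apply, uncurry_apply_pair, ← mul_assoc]
  gcongr
  exact hw k n

lemma QANorm_le_tsum_of_injective (hψ : IsPsi ψ) (he : Injective e) {w : ℕ → ℝ≥0∞}
    (hw0 : ∀ k, w k ≠ 0) (hw_top : ∀ k, w k ≠ ⊤)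
    (hw : ∀ k n, ENNReal.ofReal (ψ ((e (k, n) : ℝ) + 1)) ≤ w k * ENNReal.ofReal (ψ ((n : ℝ) + 1)))
    {h : ℝ → ℝ} {H : ℕ → ℝ → ℝ}
    (hle : ∀ᵐ x ∂μ01, ENNReal.ofReal |h x| ≤ ∑' k, ENNReal.ofReal |H k x|) :
    QANorm φ ψ h ≤ ∑' k, w k * QANorm φ ψ (H k) := by
  refine ENNReal.le_of_forall_pos_le_add fun ε hε hfin => ?_
  obtain ⟨δ, hδ0, hδ⟩ := ENNReal.exists_pos_sum_of_countable' (ENNReal.coe_ne_zero.2 hε.ne') ℕ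
  have hnear : ∀ k, ∃ gk, Admissible (H k) gk ∧
      w k * seqCost φ ψ gk < w k * QANorm φ ψ (H k) + δ k := by
    intro k
    have hk_top : w k * QANorm φ ψ (H k) ≠ ⊤ :=
      ne_top_of_le_ne_top hfin.ne (ENNReal.le_tsum (f := fun k => w k * QANorm φ ψ (H k)) k)
    simpa only [QANorm, ENNReal.mul_iInf_of_ne (hw0 k) (hw_top k), iInf_lt_iff, exists_prop]
      using ENNReal.lt_add_right hk_top (hδ0 k).ne'
  choose G hG_adm hG_cost using hnear
  calc QANorm φ ψ h
      ≤ seqCost φ ψ (extend e (uncurry G) 0) :=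
        iInf₂_le _ (admissible_extend_uncurry he hG_adm hle)
    _ ≤ ∑' k, w k * seqCost φ ψ (G k) := seqCost_extend_uncurry_le hψ he hw
    _ ≤ ∑' k, (w k * QANorm φ ψ (H k) + δ k) := ENNReal.tsum_le_tsum fun k => (hG_cost k).le
    _ ≤ ∑' k, w k * QANorm φ ψ (H k) + ε := by
        rw [ENNReal.tsum_add]
        gcongr

end Merge

lemma QANorm_le_tsum_two_pow_mul (hψ : IsPsi ψ) {h : ℝ → ℝ} {H : ℕ → ℝ → ℝ}
    (hle : ∀ᵐ x ∂μ01, ENNReal.ofReal |h x| ≤ ∑' k, ENNReal.ofReal |H k x|) :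
    QANorm φ ψ h ≤ ∑' k : ℕ, 2 ^ (k + 1) * QANorm φ ψ (H k) := by
  refine QANorm_le_tsum_of_injective hψ dyadicEncode_injective (fun _ => by simp)
    (fun _ => ENNReal.pow_ne_top ENNReal.ofNat_ne_top) (fun k n => ?_) hle
  rw [← ENNReal.ofReal_ofNat 2, ← ENNReal.ofReal_pow zero_le_two,
    ← ENNReal.ofReal_mul (by positivity)]
  exact ENNReal.ofReal_le_ofReal (hψ.apply_dyadicEncode_add_one_le k n)

@[simp]
lemma QANorm_zero : QANorm φ ψ 0 = 0 := by
  refine le_antisymm (iInf₂_le_of_le 0 ?_ ?_) zero_le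
  · exact ⟨fun _ => aemeasurable_const, by simp, fun _ _ => le_rfl, by simp⟩
  · simp [seqCost]

lemma QANorm_le_two_mul_add_four_mul (hψ : IsPsi ψ) {u a b : ℝ → ℝ}
    (hu : ∀ x, |u x| ≤ |a x| + |b x|) :
    QANorm φ ψ u ≤ 2 * QANorm φ ψ a + 4 * QANorm φ ψ b := by
  let H : ℕ → ℝ → ℝ := fun k => if k = 0 then a else if k = 1 then b else 0
  have hH : ∀ k, 2 ≤ k → H k = 0 := fun k hk => by
    simp [H, show k ≠ 0 by omega, show k ≠ 1 by omega]
  have htwo : ∀ v : ℕ → ℝ≥0∞, (∀ k, 2 ≤ k → v k = 0) → ∑' k, v k = v 0 + v 1 := by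
    intro v hv
    rw [tsum_eq_sum (s := Finset.range 2) fun k hk => hv k (by simp at hk; omega)]
    simp [Finset.sum_range_succ]
  have hle := QANorm_le_tsum_two_pow_mul (φ := φ) hψ (h := u) (H := H) (ae_of_all _ fun x => by
    rw [htwo _ fun k hk => by simp [hH k hk]]
    simpa [H, ← ENNReal.ofReal_add] using ENNReal.ofReal_le_ofReal (hu x))
  rw [htwo _ fun k hk => by simp [hH k hk]] at hle
  simpa [H, show (2 : ℝ≥0∞) ^ 2 = 4 by norm_num] using hle

lemma ofReal_abs_sub_le_tsum_of_tendsto {u : ℕ → ℝ} {l : ℝ} (hu : Tendsto u atTop (𝓝 l))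
    (K : ℕ) : ENNReal.ofReal |u K - l| ≤ ∑' j, ENNReal.ofReal |u (j + K + 1) - u (j + K)| := by
  have hpartial : ∀ M, ENNReal.ofReal |u K - u (M + K)| ≤
      ∑' j, ENNReal.ofReal |u (j + K + 1) - u (j + K)| := by
    intro M
    have htel : u (M + K) - u K = ∑ j ∈ Finset.range M, (u (j + K + 1) - u (j + K)) := by
      simpa [add_right_comm] using (Finset.sum_range_sub (fun j => u (j + K)) M).symm
    calc ENNReal.ofReal |u K - u (M + K)|
        ≤ ENNReal.ofReal (∑ j ∈ Finset.range M, |u (j + K + 1) - u (j + K)|) := by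
          rw [abs_sub_comm, htel]
          exact ENNReal.ofReal_le_ofReal (Finset.abs_sum_le_sum_abs _ _)
      _ = ∑ j ∈ Finset.range M, ENNReal.ofReal |u (j + K + 1) - u (j + K)| :=
          ENNReal.ofReal_sum_of_nonneg fun _ _ => abs_nonneg _
      _ ≤ _ := ENNReal.sum_le_tsum _
  have hlim : Tendsto (fun M => ENNReal.ofReal |u K - u (M + K)|) atTop
      (𝓝 (ENNReal.ofReal |u K - l|)) :=
    (ENNReal.continuous_ofReal.tendsto _).comp
      (tendsto_const_nhds.sub (hu.comp (tendsto_add_atTop_nat K))).abs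
  exact le_of_tendsto' hlim hpartial

lemma exists_tendsto_QANorm_sub_of_fast_cauchy (hφ : IsPhi φ) (hψ : IsPsi ψ)
    {G : ℕ → ℝ → ℝ} (hG : ∀ n, AEMeasurable (G n) μ01) {ε : ℕ → ℝ≥0∞}
    (hε : ∑' k, 2 ^ (k + 1) * ε k ≠ ⊤)
    (hGε : ∀ N n m, N ≤ n → N ≤ m → QANorm φ ψ (G n - G m) < ε N) :
    ∃ f : ℝ → ℝ, AEMeasurable f μ01 ∧
      Tendsto (fun K => QANorm φ ψ (G K - f)) atTop (𝓝 0) := by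
  have hε_sum : ∑' k, (ENNReal.ofReal (ψ 1 * φ 1))⁻¹ * ε k ≠ ⊤ := by
    rw [ENNReal.tsum_mul_left]
    refine ENNReal.mul_ne_top (ENNReal.inv_ne_top.2 ?_) (ne_top_of_le_ne_top hε ?_)
    · exact (ENNReal.ofReal_pos.2 (mul_pos (hψ.pos 1 one_pos) (hφ.pos 1 one_pos le_rfl))).ne'
    · exact ENNReal.tsum_le_tsum fun k => le_mul_of_one_le_left' (one_le_pow₀ one_le_two)
  have hconv : ∀ᵐ x ∂μ01, ∃ l, Tendsto (fun n => G n x) atTop (𝓝 l) :=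
    Lp.ae_tendsto_of_cauchy_eLpNorm (fun n => (hG n).aestronglyMeasurable) le_rfl hε_sum
      fun N n m hn hm => eLpNorm_one_lt_of_QANorm_lt hφ hψ (hGε N n m hn hm)
  set f : ℝ → ℝ := fun x => limUnder atTop fun n => G n x
  have hf : ∀ᵐ x ∂μ01, Tendsto (fun n => G n x) atTop (𝓝 (f x)) :=
    hconv.mono fun _ hx => tendsto_nhds_limUnder hx
  refine ⟨f, aemeasurable_of_tendsto_metrizable_ae atTop hG hf, ?_⟩
  have htail : ∀ K, QANorm φ ψ (G K - f) ≤ ∑' j, 2 ^ (j + K + 1) * ε (j + K) := by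
    intro K
    refine (QANorm_le_tsum_two_pow_mul hψ (H := fun j => G (j + K + 1) - G (j + K))
      (hf.mono fun x hx => ofReal_abs_sub_le_tsum_of_tendsto hx K)).trans ?_
    refine ENNReal.tsum_le_tsum fun j => ?_
    gcongr
    · exact one_le_two
    · omega
    · exact (hGε _ _ _ (by omega) le_rfl).le
  exact tendsto_of_tendsto_of_tendsto_of_le_of_le tendsto_const_nhds
    (ENNReal.tendsto_sum_nat_add _ hε) (fun _ => zero_le) htail

lemma tendsto_QANorm_sub_of_cauchy_of_subseq (hψ : IsPsi ψ) {F : ℕ → ℝ → ℝ} {f : ℝ → ℝ}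
    (hF : ∀ ε : ℝ≥0∞, 0 < ε → ∃ N, ∀ m ≥ N, ∀ n ≥ N, QANorm φ ψ (F m - F n) < ε)
    {ns : ℕ → ℕ} (hns : Tendsto ns atTop atTop)
    (hf : Tendsto (fun K => QANorm φ ψ (F (ns K) - f)) atTop (𝓝 0)) :
    Tendsto (fun n => QANorm φ ψ (F n - f)) atTop (𝓝 0) := by
  refine ENNReal.tendsto_atTop_zero.2 fun ε hε => ?_
  have hδ : 0 < ε / 6 := ENNReal.div_pos_iff.2 ⟨hε.ne', ENNReal.ofNat_ne_top⟩
  obtain ⟨N, hN⟩ := hF _ hδ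
  obtain ⟨K, hK, hNK⟩ := ((hf.eventually (gt_mem_nhds hδ)).and (hns.eventually_ge_atTop N)).exists
  refine ⟨N, fun m hm => ?_⟩
  calc QANorm φ ψ (F m - f)
      ≤ 2 * QANorm φ ψ (F m - F (ns K)) + 4 * QANorm φ ψ (F (ns K) - f) :=
        QANorm_le_two_mul_add_four_mul hψ fun x => abs_sub_le _ _ _
    _ ≤ 2 * (ε / 6) + 4 * (ε / 6) := by gcongr; exact (hN m hm _ hNK).le
    _ = 6 * (ε / 6) := by ring
    _ ≤ ε := ENNReal.mul_div_le

lemma exists_pos_tsum_two_pow_mul_ne_top :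
    ∃ ε : ℕ → ℝ≥0∞, (∀ k, 0 < ε k) ∧ ∑' k, 2 ^ (k + 1) * ε k ≠ ⊤ := by
  obtain ⟨δ, hδ0, hδ⟩ := ENNReal.exists_pos_sum_of_countable' one_ne_zero ℕ
  refine ⟨fun k => δ k / 2 ^ (k + 1), fun k => ?_, ?_⟩
  · exact ENNReal.div_pos_iff.2 ⟨(hδ0 k).ne', ENNReal.pow_ne_top ENNReal.ofNat_ne_top⟩
  · simp_rw [ENNReal.mul_div_cancel (pow_ne_zero _ two_ne_zero)
      (ENNReal.pow_ne_top ENNReal.ofNat_ne_top)]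
    exact ne_top_of_lt (hδ.trans ENNReal.one_lt_top)

/-- completeness of `QA_{φ,ψ}`: every Cauchy sequence with respect to the
quasi-norm converges in the quasi-norm to some element of `QA_{φ,ψ}`. -/
theorem stmt5 {φ ψ : ℝ → ℝ} (hφ : IsPhi φ) (hψ : IsPsi ψ)
    (F : ℕ → ℝ → ℝ) (hF : ∀ n, MemQA φ ψ (F n))
    (hCauchy : ∀ ε : ℝ, 0 < ε → ∃ N : ℕ, ∀ m ≥ N, ∀ n ≥ N,
      QANorm φ ψ (F m - F n) < ENNReal.ofReal ε) :
    ∃ f : ℝ → ℝ, MemQA φ ψ f ∧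
      Tendsto (fun n => QANorm φ ψ (F n - f)) atTop (𝓝 0) := by
  have hC : ∀ ε : ℝ≥0∞, 0 < ε → ∃ N, ∀ m ≥ N, ∀ n ≥ N, QANorm φ ψ (F m - F n) < ε := by
    intro ε hε
    obtain ⟨r, -, hr0, hrε⟩ := ENNReal.lt_iff_exists_real_btwn.1 hε
    obtain ⟨N, hN⟩ := hCauchy r (ENNReal.ofReal_pos.1 hr0)
    exact ⟨N, fun m hm n hn => (hN m hm n hn).trans hrε⟩
  obtain ⟨ε, hε0, hε⟩ := exists_pos_tsum_two_pow_mul_ne_top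
  obtain ⟨ns, hns_mono, hns⟩ : ∃ ns : ℕ → ℕ, StrictMono ns ∧
      ∀ k, ∀ m ≥ ns k, ∀ n ≥ ns k, QANorm φ ψ (F m - F n) < ε k :=
    extraction_forall_of_eventually' fun k => (hC _ (hε0 k)).imp
      fun N hN n hn m hm m' hm' => hN m (hn.trans hm) m' (hn.trans hm')
  obtain ⟨f, hf_meas, hf_sub⟩ := exists_tendsto_QANorm_sub_of_fast_cauchy hφ hψ
    (fun n => (hF (ns n)).1) hε fun N n m hn hm =>
      hns N _ (hns_mono.monotone hn) _ (hns_mono.monotone hm)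
  have hlim := tendsto_QANorm_sub_of_cauchy_of_subseq hψ hC hns_mono.tendsto_atTop hf_sub
  obtain ⟨n, hn_fin⟩ := (hlim.eventually (gt_mem_nhds ENNReal.zero_lt_top)).exists
  refine ⟨f, ⟨hf_meas, ?_⟩, hlim⟩
  calc QANorm φ ψ f ≤ 2 * QANorm φ ψ (F n) + 4 * QANorm φ ψ (F n - f) :=
        QANorm_le_two_mul_add_four_mul hψ fun x => by simpa using abs_sub (F n x) (F n x - f x)
    _ < ⊤ := by have := (hF n).2; finiteness
end
end

section
/- $QA_{\varphi,\psi}=L^1$ if and only if $\varphi$ is equivalent to the identity. Precisely: there exists a constant $K>0$ such that $K^{-1}\|f\|_1\le\|f\|_{\varphi,\psi}\le K\,\|f\|_1$ for every measurable function $f$ on $[0,1]$ if and only if there exists a constant $C>0$ with $\varphi(t)\le C\,t$ for all $t\in[0,1]$. -/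
/-!
A piece `g` of a decomposition with `‖g‖₁ = A`, `‖g‖_∞ = B` costs `ψ(n) B φ(A/B)`, which is at
least `ψ(1) (φ(t)/t) min(A, tB) ≥ ψ(1) (φ(t)/t) ∫₀ᵗ g` because `φ(s)/s` decreases. Summing,
`ψ(1) (φ(t)/t) ∫₀ᵗ |f| ≤ ‖f‖_{φ,ψ}`. For `f = 1_{[0,t]}` this reads `ψ(1) φ(t) ≤ ‖f‖_{φ,ψ}`, so an
upper bound `K ‖f‖₁ = K t` forces `φ(t) ≤ C t`; for `t = 1` it is the lower bound
`ψ(1) φ(1) ‖f‖₁ ≤ ‖f‖_{φ,ψ}`.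

Conversely, if `φ(t) ≤ C t` then the `n`-th piece costs at most `ψ(n) C ‖gₙ‖₁ ≤ n ψ(1) C ‖gₙ‖₁`
(`ψ` is concave with `ψ(0) = 0`). Slicing `|f|` horizontally at levels so high that
`‖gₙ‖₁ ≤ 4^(1-n) ‖f‖₁` makes the total cost at most `2 ψ(1) C ‖f‖₁`.
-/

open MeasureTheory ENNReal Set Filter Topology

noncomputable section

lemma ConcaveOn.mul_le_map_mul {s : Set ℝ} {f : ℝ → ℝ} (hf : ConcaveOn ℝ s f) (h0 : (0 : ℝ) ∈ s)
    (hf0 : f 0 = 0) {a x : ℝ} (hx : x ∈ s) (ha0 : 0 ≤ a) (ha1 : a ≤ 1) :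
    a * f x ≤ f (a * x) := by
  simpa [hf0] using hf.2 hx h0 ha0 (sub_nonneg.2 ha1) (add_sub_cancel a 1)

namespace IsPhi

variable {φ : ℝ → ℝ}

lemma nonneg (hφ : IsPhi φ) {t : ℝ} (ht0 : 0 ≤ t) (ht1 : t ≤ 1) : 0 ≤ φ t := by
  rcases ht0.eq_or_lt with rfl | ht0
  · exact hφ.zero.ge
  · exact (hφ.pos t ht0 ht1).le

lemma div_mul_le (hφ : IsPhi φ) {r t : ℝ} (hr : 0 ≤ r) (hrt : r ≤ t) (ht1 : t ≤ 1) :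
    r / t * φ t ≤ φ r := by
  rcases (hr.trans hrt).eq_or_lt with rfl | ht
  · simp [le_antisymm hrt hr, hφ.zero]
  have h := hφ.concave.mul_le_map_mul (by simp) hφ.zero ⟨ht.le, ht1⟩ (div_nonneg hr ht.le)
    ((div_le_one ht).2 hrt)
  rwa [div_mul_cancel₀ r ht.ne'] at h

/-- `B φ(A/B)` is the cost of a piece with `‖·‖₁ = A` and `‖·‖_∞ = B`; the two cases are
`φ(s)/s` decreasing and `φ` increasing. -/
lemma div_mul_min_le (hφ : IsPhi φ) {t A B : ℝ} (ht : 0 < t) (ht1 : t ≤ 1) (hA : 0 ≤ A)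
    (hAB : A ≤ B) :
    φ t / t * min A (t * B) ≤ B * φ (A / B) := by
  rcases (hA.trans hAB).eq_or_lt with rfl | hB
  · simp [le_antisymm hAB hA]
  have hr0 : 0 ≤ A / B := div_nonneg hA hB.le
  rcases le_or_gt (A / B) t with hc | hc
  · calc φ t / t * min A (t * B) ≤ φ t / t * A :=
          mul_le_mul_of_nonneg_left (min_le_left _ _) (div_nonneg (hφ.nonneg ht.le ht1) ht.le)
      _ = B * (A / B / t * φ t) := by field_simp
      _ ≤ B * φ (A / B) := mul_le_mul_of_nonneg_left (hφ.div_mul_le hr0 hc ht1) hB.le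
  · calc φ t / t * min A (t * B) ≤ φ t / t * (t * B) :=
          mul_le_mul_of_nonneg_left (min_le_right _ _) (div_nonneg (hφ.nonneg ht.le ht1) ht.le)
      _ = B * φ t := by field_simp
      _ ≤ B * φ (A / B) := mul_le_mul_of_nonneg_left
          (hφ.mono ⟨ht.le, ht1⟩ ⟨hr0, (div_le_one hB).2 hAB⟩ hc.le) hB.le

end IsPhi

namespace IsPsi

variable {ψ : ℝ → ℝ}

lemma le_natCast_add_one (hψ : IsPsi ψ) (n : ℕ) : ψ 1 ≤ ψ ((n : ℝ) + 1) :=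
  hψ.mono (mem_Ici.2 zero_le_one) (mem_Ici.2 (by positivity)) (by simp)

lemma natCast_add_one_le (hψ : IsPsi ψ) (n : ℕ) : ψ ((n : ℝ) + 1) ≤ ((n : ℝ) + 1) * ψ 1 := by
  have hn : (0 : ℝ) < (n : ℝ) + 1 := by positivity
  have h := hψ.concave.mul_le_map_mul self_mem_Ici hψ.zero (mem_Ici.2 hn.le)
    (inv_nonneg.2 hn.le) (inv_le_one_of_one_le₀ (by simp))
  rw [inv_mul_cancel₀ hn.ne'] at h
  exact (inv_mul_le_iff₀ hn).1 h

end IsPsi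

section Layers

variable {α : Type*} {h : α → ℝ} {θ : ℕ → ℝ}

def layer (h : α → ℝ) (θ : ℕ → ℝ) (n : ℕ) (x : α) : ℝ :=
  min (h x) (θ (n + 1)) - min (h x) (θ n)

lemma layer_nonneg (hθ : Monotone θ) (n : ℕ) (x : α) : 0 ≤ layer h θ n x :=
  sub_nonneg.2 (min_le_min_left _ (hθ n.le_succ))

lemma layer_le (hx : 0 ≤ h x) (hθn : 0 ≤ θ n) : layer h θ n x ≤ θ (n + 1) := by
  unfold layer
  linarith [min_le_right (h x) (θ (n + 1)), le_min hx hθn]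

lemma layer_le_indicator (hθ : Monotone θ) (hx : 0 ≤ h x) (hθn : 0 ≤ θ n) :
    layer h θ n x ≤ {y | θ n < h y}.indicator h x := by
  unfold layer
  by_cases hlt : θ n < h x
  · rw [indicator_of_mem (show x ∈ {y | θ n < h y} from hlt)]
    linarith [min_le_left (h x) (θ (n + 1)), le_min hx hθn]
  · rw [indicator_of_notMem (show x ∉ {y | θ n < h y} from hlt), min_eq_left (not_lt.1 hlt),
      min_eq_left ((not_lt.1 hlt).trans (hθ n.le_succ)), sub_self]

lemma sum_range_layer (hθ0 : θ 0 = 0) (hx : 0 ≤ h x) (N : ℕ) :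
    ∑ n ∈ Finset.range N, layer h θ n x = min (h x) (θ N) := by
  simp only [layer]
  rw [Finset.sum_range_sub (fun n => min (h x) (θ n)), hθ0, min_eq_right hx, sub_zero]

lemma hasSum_layer (hθ : Monotone θ) (hθ0 : θ 0 = 0) (hθ_top : Tendsto θ atTop atTop)
    (hx : 0 ≤ h x) : HasSum (fun n => layer h θ n x) (h x) := by
  rw [hasSum_iff_tendsto_nat_of_nonneg (layer_nonneg hθ · x)]
  refine tendsto_const_nhds.congr' ?_
  filter_upwards [hθ_top.eventually_ge_atTop (h x)] with N hN
  rw [sum_range_layer hθ0 hx, min_eq_left hN]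

variable [MeasurableSpace α]

lemma exists_nat_measure_lt_le {ν : Measure α} [IsFiniteMeasure ν] (hh : Measurable h)
    {r : ℝ≥0∞} (hr : r ≠ 0) (n : ℕ) : ∃ M : ℕ, ν {x | (M : ℝ) < h x} ≤ ν univ * r ^ n := by
  rcases eq_or_ne (ν univ) 0 with hν | hν
  · exact ⟨0, by simp [Measure.measure_univ_eq_zero.1 hν]⟩
  have htail : Tendsto (fun M : ℕ => ν {x | (M : ℝ) < h x}) atTop (𝓝 0) := by
    have hInter : ⋂ M : ℕ, {x | (M : ℝ) < h x} = ∅ :=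
      iInter_eq_empty_iff.2 fun x => (exists_nat_ge (h x)).imp fun _ => not_lt.2
    have := tendsto_measure_iInter_atTop (μ := ν) (s := fun M : ℕ => {x | (M : ℝ) < h x})
      (fun M => (hh measurableSet_Ioi).nullMeasurableSet)
      (fun _ _ hMM' => ofPred_subset_ofPred.2 fun _ => (Nat.cast_le.2 hMM').trans_lt)
      ⟨0, measure_ne_top _ _⟩
    rwa [hInter, measure_empty] at this
  exact (htail.eventually_le_const (ENNReal.mul_pos hν (pow_ne_zero _ hr))).exists

lemma exists_levels {ν : Measure α} [IsFiniteMeasure ν] (hh : Measurable h) {r : ℝ≥0∞}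
    (hr : r ≠ 0) : ∃ θ : ℕ → ℝ, θ 0 = 0 ∧ Monotone θ ∧ Tendsto θ atTop atTop ∧
      ∀ n, ν {x | θ n < h x} ≤ ν univ * r ^ n := by
  choose M hM using exists_nat_measure_lt_le (ν := ν) hh hr
  let θ : ℕ → ℕ := fun n => ∑ k ∈ Finset.range n, (M (k + 1) + 1)
  have hθ_succ (n : ℕ) : θ (n + 1) = θ n + M (n + 1) + 1 := by
    simp only [θ, Finset.sum_range_succ, add_assoc]
  have hθ : StrictMono θ := strictMono_nat_of_lt_succ fun n => by rw [hθ_succ]; omega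
  refine ⟨fun n => θ n, by simp [θ], Nat.mono_cast.comp hθ.monotone,
    tendsto_natCast_atTop_atTop.comp hθ.tendsto_atTop, ?_⟩
  rintro (_ | n)
  · exact (measure_mono (subset_univ _)).trans (by simp)
  · refine (measure_mono fun x (hx : (θ (n + 1) : ℝ) < h x) => ?_).trans (hM (n + 1))
    exact lt_of_le_of_lt (by rw [hθ_succ]; push_cast; linarith [(θ n).cast_nonneg (α := ℝ)]) hx

theorem exists_levels_lintegral_layer_le {μ : Measure α} (hh : Measurable h)
    (h0 : ∀ x, 0 ≤ h x) (hfin : ∫⁻ x, ENNReal.ofReal (h x) ∂μ ≠ ⊤) {r : ℝ≥0∞} (hr : r ≠ 0) :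
    ∃ θ : ℕ → ℝ, θ 0 = 0 ∧ Monotone θ ∧ Tendsto θ atTop atTop ∧
      ∀ n, ∫⁻ x, ENNReal.ofReal (layer h θ n x) ∂μ ≤
        (∫⁻ x, ENNReal.ofReal (h x) ∂μ) * r ^ n := by
  let ν := μ.withDensity fun x => ENNReal.ofReal (h x)
  have : IsFiniteMeasure ν := isFiniteMeasure_withDensity hfin
  obtain ⟨θ, hθ0, hθ, hθ_top, hθν⟩ := exists_levels (ν := ν) hh hr
  have hθ_nonneg (n : ℕ) : 0 ≤ θ n := hθ0 ▸ hθ n.zero_le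
  refine ⟨θ, hθ0, hθ, hθ_top, fun n => ?_⟩
  have hs : MeasurableSet {x | θ n < h x} := hh measurableSet_Ioi
  calc ∫⁻ x, ENNReal.ofReal (layer h θ n x) ∂μ
      ≤ ∫⁻ x, {y | θ n < h y}.indicator (fun y => ENNReal.ofReal (h y)) x ∂μ := by
        refine lintegral_mono fun x => ?_
        rw [← Function.comp_def ENNReal.ofReal h, indicator_comp_of_zero ENNReal.ofReal_zero]
        exact ENNReal.ofReal_le_ofReal (layer_le_indicator hθ (h0 x) (hθ_nonneg n))
    _ = ν {x | θ n < h x} := by rw [lintegral_indicator hs, withDensity_apply _ hs]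
    _ ≤ ν univ * r ^ n := hθν n
    _ = (∫⁻ x, ENNReal.ofReal (h x) ∂μ) * r ^ n := by
        rw [withDensity_apply _ MeasurableSet.univ, Measure.restrict_univ]

end Layers

instance inst_s9 : IsProbabilityMeasure μ01 :=
  ⟨by simp [μ01, Real.volume_Icc]⟩

lemma μ01_Icc {t : ℝ} (ht1 : t ≤ 1) : μ01 (Icc 0 t) = ENNReal.ofReal t := by
  rw [μ01, Measure.restrict_apply measurableSet_Icc,
    inter_eq_self_of_subset_left (Icc_subset_Icc le_rfl ht1), Real.volume_Icc, sub_zero]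

lemma eLpNorm_one_le_eLpNorm_top {g : ℝ → ℝ} (hg : AEMeasurable g μ01) :
    eLpNorm g 1 μ01 ≤ eLpNorm g ⊤ μ01 :=
  eLpNorm_le_eLpNorm_of_exponent_le le_top hg.aestronglyMeasurable

lemma eLpNorm_one_eq_setLIntegral_Icc (f : ℝ → ℝ) :
    eLpNorm f 1 μ01 = ∫⁻ x in Icc 0 1, ENNReal.ofReal |f x| ∂μ01 := by
  simp only [eLpNorm_one_eq_lintegral_enorm, Real.enorm_eq_ofReal_abs, μ01,
    Measure.restrict_restrict measurableSet_Icc, inter_self]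

lemma setLIntegral_Icc_le_min {g : ℝ → ℝ} {t : ℝ} (ht1 : t ≤ 1) :
    ∫⁻ x in Icc 0 t, ENNReal.ofReal (g x) ∂μ01 ≤
      min (eLpNorm g 1 μ01) (ENNReal.ofReal t * eLpNorm g ⊤ μ01) := by
  refine le_min ?_ ?_
  · rw [eLpNorm_one_eq_lintegral_enorm]
    exact (setLIntegral_le_lintegral _ _).trans (lintegral_mono fun x => Real.ofReal_le_enorm _)
  · calc ∫⁻ x in Icc 0 t, ENNReal.ofReal (g x) ∂μ01
        ≤ ∫⁻ _ in Icc 0 t, eLpNorm g ⊤ μ01 ∂μ01 := by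
          refine lintegral_mono_ae (ae_restrict_of_ae ?_)
          filter_upwards [enorm_ae_le_eLpNormEssSup g μ01] with x hx
          exact (Real.ofReal_le_enorm _).trans (by rwa [eLpNorm_exponent_top])
      _ = ENNReal.ofReal t * eLpNorm g ⊤ μ01 := by
          rw [setLIntegral_const, μ01_Icc ht1, mul_comm]

lemma setLIntegral_le_tsum_of_admissible {f : ℝ → ℝ} {g : ℕ → ℝ → ℝ} (hg : Admissible f g)
    (s : Set ℝ) :
    ∫⁻ x in s, ENNReal.ofReal |f x| ∂μ01 ≤ ∑' n, ∫⁻ x in s, ENNReal.ofReal (g n x) ∂μ01 :=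
  (lintegral_mono_ae (ae_restrict_of_ae hg.2.2.2)).trans_eq
    (lintegral_tsum fun n => ENNReal.measurable_ofReal.comp_aemeasurable (hg.1 n).restrict)

def pieceCost (φ ψ : ℝ → ℝ) (n : ℕ) (a b : ℝ≥0∞) : ℝ≥0∞ :=
  ENNReal.ofReal (ψ ((n : ℝ) + 1) * b.toReal * φ ((a / b).toReal))

lemma seqCost_eq_tsum_pieceCost (φ ψ : ℝ → ℝ) (g : ℕ → ℝ → ℝ) :
    seqCost φ ψ g = ∑' n, pieceCost φ ψ n (eLpNorm (g n) 1 μ01) (eLpNorm (g n) ⊤ μ01) :=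
  rfl

section PieceCost

variable {φ ψ : ℝ → ℝ} {a b : ℝ≥0∞}

lemma ofReal_mul_min_le_pieceCost (hφ : IsPhi φ) (hψ : IsPsi ψ) {t : ℝ} (ht : 0 < t)
    (ht1 : t ≤ 1) (hab : a ≤ b) (hb : b ≠ ⊤) (n : ℕ) :
    ENNReal.ofReal (ψ 1 * (φ t / t)) * min a (ENNReal.ofReal t * b) ≤ pieceCost φ ψ n a b := by
  have ha : a ≠ ⊤ := ne_top_of_le_ne_top hb hab
  have hAB : a.toReal ≤ b.toReal := ENNReal.toReal_mono hb hab
  have hψ1 : 0 ≤ ψ 1 := (hψ.pos 1 one_pos).le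
  have hcost : 0 ≤ b.toReal * φ (a.toReal / b.toReal) :=
    mul_nonneg ENNReal.toReal_nonneg (hφ.nonneg (by positivity) (div_le_one_of_le₀ hAB
      ENNReal.toReal_nonneg))
  rw [pieceCost, ENNReal.toReal_div]
  conv_lhs => rw [← ENNReal.ofReal_toReal ha, ← ENNReal.ofReal_toReal hb]
  rw [← ENNReal.ofReal_mul ht.le, ← ENNReal.ofReal_min,
    ← ENNReal.ofReal_mul (mul_nonneg hψ1 (div_nonneg (hφ.nonneg ht.le ht1) ht.le))]
  refine ENNReal.ofReal_le_ofReal ?_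
  calc ψ 1 * (φ t / t) * min a.toReal (t * b.toReal)
      = ψ 1 * (φ t / t * min a.toReal (t * b.toReal)) := mul_assoc _ _ _
    _ ≤ ψ 1 * (b.toReal * φ (a.toReal / b.toReal)) :=
        mul_le_mul_of_nonneg_left (hφ.div_mul_min_le ht ht1 ENNReal.toReal_nonneg hAB) hψ1
    _ ≤ ψ ((n : ℝ) + 1) * (b.toReal * φ (a.toReal / b.toReal)) :=
        mul_le_mul_of_nonneg_right (hψ.le_natCast_add_one n) hcost
    _ = ψ ((n : ℝ) + 1) * b.toReal * φ (a.toReal / b.toReal) := (mul_assoc _ _ _).symm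

lemma pieceCost_le (hφ : IsPhi φ) (hψ : IsPsi ψ) {C : ℝ}
    (hC : ∀ t : ℝ, 0 ≤ t → t ≤ 1 → φ t ≤ C * t) (hab : a ≤ b) (hb : b ≠ ⊤) (n : ℕ) :
    pieceCost φ ψ n a b ≤ ((n : ℝ≥0∞) + 1) * ENNReal.ofReal (ψ 1 * C) * a := by
  have ha : a ≠ ⊤ := ne_top_of_le_ne_top hb hab
  have hAB : a.toReal ≤ b.toReal := ENNReal.toReal_mono hb hab
  have hr0 : 0 ≤ a.toReal / b.toReal := by positivity
  have hr1 : a.toReal / b.toReal ≤ 1 := div_le_one_of_le₀ hAB ENNReal.toReal_nonneg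
  have hC0 : 0 ≤ C := (hφ.pos 1 one_pos le_rfl).le.trans (by simpa using hC 1 zero_le_one le_rfl)
  have hψ1 : 0 ≤ ψ 1 := (hψ.pos 1 one_pos).le
  have hψn : 0 ≤ ((n : ℝ) + 1) * ψ 1 := mul_nonneg (by positivity) hψ1
  have hφC : b.toReal * φ (a.toReal / b.toReal) ≤ C * a.toReal := by
    rcases (ENNReal.toReal_nonneg.trans hAB).eq_or_lt with hB | hB
    · simp [← hB, le_antisymm (hB ▸ hAB) ENNReal.toReal_nonneg]
    calc b.toReal * φ (a.toReal / b.toReal) ≤ b.toReal * (C * (a.toReal / b.toReal)) :=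
          mul_le_mul_of_nonneg_left (hC _ hr0 hr1) hB.le
      _ = C * a.toReal := by field_simp
  rw [pieceCost, ENNReal.toReal_div]
  calc ENNReal.ofReal (ψ ((n : ℝ) + 1) * b.toReal * φ (a.toReal / b.toReal))
      ≤ ENNReal.ofReal (((n : ℝ) + 1) * ψ 1 * (C * a.toReal)) := by
        rw [mul_assoc]
        refine ENNReal.ofReal_le_ofReal ?_
        calc ψ ((n : ℝ) + 1) * (b.toReal * φ (a.toReal / b.toReal))
            ≤ ((n : ℝ) + 1) * ψ 1 * (b.toReal * φ (a.toReal / b.toReal)) :=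
              mul_le_mul_of_nonneg_right (hψ.natCast_add_one_le n)
                (mul_nonneg ENNReal.toReal_nonneg (hφ.nonneg hr0 hr1))
          _ ≤ ((n : ℝ) + 1) * ψ 1 * (C * a.toReal) := mul_le_mul_of_nonneg_left hφC hψn
    _ = ((n : ℝ≥0∞) + 1) * ENNReal.ofReal (ψ 1 * C) * a := by
        rw [show ((n : ℝ) + 1) * ψ 1 * (C * a.toReal) = ((n : ℝ) + 1) * (ψ 1 * C) * a.toReal
          by ring, ENNReal.ofReal_mul (mul_nonneg (by positivity) (mul_nonneg hψ1 hC0)),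
          ENNReal.ofReal_mul (by positivity),
          ENNReal.ofReal_toReal ha, ENNReal.ofReal_add (by positivity) zero_le_one,
          ENNReal.ofReal_natCast, ENNReal.ofReal_one]

end PieceCost

theorem ofReal_mul_setLIntegral_le_QANorm {φ ψ : ℝ → ℝ} (hφ : IsPhi φ) (hψ : IsPsi ψ) {t : ℝ}
    (ht : 0 < t) (ht1 : t ≤ 1) (f : ℝ → ℝ) :
    ENNReal.ofReal (ψ 1 * (φ t / t)) * ∫⁻ x in Icc 0 t, ENNReal.ofReal |f x| ∂μ01 ≤
      QANorm φ ψ f := by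
  refine le_iInf₂ fun g hg => ?_
  calc ENNReal.ofReal (ψ 1 * (φ t / t)) * ∫⁻ x in Icc 0 t, ENNReal.ofReal |f x| ∂μ01
      ≤ ENNReal.ofReal (ψ 1 * (φ t / t)) *
          ∑' n, min (eLpNorm (g n) 1 μ01) (ENNReal.ofReal t * eLpNorm (g n) ⊤ μ01) := by
        gcongr
        exact (setLIntegral_le_tsum_of_admissible hg _).trans
          (ENNReal.tsum_le_tsum fun n => setLIntegral_Icc_le_min ht1)
    _ = ∑' n, ENNReal.ofReal (ψ 1 * (φ t / t)) *
          min (eLpNorm (g n) 1 μ01) (ENNReal.ofReal t * eLpNorm (g n) ⊤ μ01) :=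
        ENNReal.tsum_mul_left.symm
    _ ≤ seqCost φ ψ g := ENNReal.tsum_le_tsum fun n => ofReal_mul_min_le_pieceCost hφ hψ ht ht1
          (eLpNorm_one_le_eLpNorm_top (hg.1 n)) (hg.2.1 n).ne n

lemma tsum_natCast_add_one_mul_inv_four_pow_le :
    ∑' n : ℕ, ((n : ℝ≥0∞) + 1) * 4⁻¹ ^ n ≤ 2 := by
  have hterm (n : ℕ) : ((n : ℝ≥0∞) + 1) * 4⁻¹ ^ n ≤ 2⁻¹ ^ n := by
    have hn : (n : ℝ≥0∞) + 1 ≤ 2 ^ n := by exact_mod_cast Nat.lt_two_pow_self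
    calc ((n : ℝ≥0∞) + 1) * 4⁻¹ ^ n ≤ 2 ^ n * 4⁻¹ ^ n := by gcongr
      _ = 2⁻¹ ^ n := by
        rw [← mul_pow, show (4 : ℝ≥0∞) = 2 * 2 by norm_num, ENNReal.mul_inv (by simp) (by simp),
          ← mul_assoc, ENNReal.mul_inv_cancel two_ne_zero ENNReal.ofNat_ne_top, one_mul]
  calc ∑' n : ℕ, ((n : ℝ≥0∞) + 1) * 4⁻¹ ^ n ≤ ∑' n : ℕ, (2⁻¹ : ℝ≥0∞) ^ n :=
        ENNReal.tsum_le_tsum hterm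
    _ = 2 := by rw [ENNReal.tsum_geometric, ENNReal.one_sub_inv_two, inv_inv]

lemma seqCost_le_of_eLpNorm_le {φ ψ : ℝ → ℝ} (hφ : IsPhi φ) (hψ : IsPsi ψ) {C : ℝ}
    (hC : ∀ t : ℝ, 0 ≤ t → t ≤ 1 → φ t ≤ C * t) {g : ℕ → ℝ → ℝ}
    (hg : ∀ n, AEMeasurable (g n) μ01) (hg_top : ∀ n, eLpNorm (g n) ⊤ μ01 < ⊤) {A : ℝ≥0∞}
    (hgA : ∀ n, eLpNorm (g n) 1 μ01 ≤ A * 4⁻¹ ^ n) :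
    seqCost φ ψ g ≤ ENNReal.ofReal (ψ 1 * C) * A * 2 := by
  rw [seqCost_eq_tsum_pieceCost]
  calc ∑' n, pieceCost φ ψ n (eLpNorm (g n) 1 μ01) (eLpNorm (g n) ⊤ μ01)
      ≤ ∑' n : ℕ, ((n : ℝ≥0∞) + 1) * ENNReal.ofReal (ψ 1 * C) * (A * 4⁻¹ ^ n) :=
        ENNReal.tsum_le_tsum fun n =>
          (pieceCost_le hφ hψ hC (eLpNorm_one_le_eLpNorm_top (hg n)) (hg_top n).ne n).trans
            (by gcongr; exact hgA n)
    _ = ENNReal.ofReal (ψ 1 * C) * A * ∑' n : ℕ, ((n : ℝ≥0∞) + 1) * 4⁻¹ ^ n := by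
        rw [← ENNReal.tsum_mul_left]
        exact tsum_congr fun n => by ring
    _ ≤ ENNReal.ofReal (ψ 1 * C) * A * 2 := by
        gcongr
        exact tsum_natCast_add_one_mul_inv_four_pow_le

lemma exists_admissible_eLpNorm_le {f : ℝ → ℝ} (hf : AEMeasurable f μ01)
    (hfin : eLpNorm f 1 μ01 ≠ ⊤) :
    ∃ g, Admissible f g ∧ ∀ n, eLpNorm (g n) 1 μ01 ≤ eLpNorm f 1 μ01 * 4⁻¹ ^ n := by
  set h : ℝ → ℝ := fun x => |hf.mk f x|
  have hh : Measurable h := hf.measurable_mk.abs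
  have h0 (x : ℝ) : 0 ≤ h x := abs_nonneg _
  have hf_eq : eLpNorm f 1 μ01 = ∫⁻ x, ENNReal.ofReal (h x) ∂μ01 := by
    rw [eLpNorm_congr_ae hf.ae_eq_mk, eLpNorm_one_eq_lintegral_enorm]
    simp only [h, Real.enorm_eq_ofReal_abs]
  obtain ⟨θ, hθ0, hθ, hθ_top, hθ_int⟩ :=
    exists_levels_lintegral_layer_le hh h0 (hf_eq ▸ hfin) (r := 4⁻¹) (by simp)
  have hθ_nonneg (n : ℕ) : 0 ≤ θ n := hθ0 ▸ hθ n.zero_le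
  have hg_meas (n : ℕ) : Measurable (layer h θ n) :=
    (hh.min measurable_const).sub (hh.min measurable_const)
  have hg_norm (n : ℕ) (x : ℝ) : ‖layer h θ n x‖ = layer h θ n x :=
    Real.norm_of_nonneg (layer_nonneg hθ n x)
  refine ⟨layer h θ, ⟨fun n => (hg_meas n).aemeasurable, fun n => ?_, layer_nonneg hθ, ?_⟩,
    fun n => ?_⟩
  · refine (MemLp.of_bound (hg_meas n).aestronglyMeasurable (θ (n + 1))
      (ae_of_all _ fun x => ?_)).eLpNorm_lt_top
    rw [hg_norm]
    exact layer_le (h0 x) (hθ_nonneg n)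
  · filter_upwards [hf.ae_eq_mk] with x hx
    have hsum := hasSum_layer hθ hθ0 hθ_top (h0 x)
    rw [hx, ← ENNReal.ofReal_tsum_of_nonneg (layer_nonneg hθ · x) hsum.summable, hsum.tsum_eq]
  · rw [eLpNorm_one_eq_lintegral_enorm, hf_eq]
    simpa only [Real.enorm_eq_ofReal_abs, abs_of_nonneg (layer_nonneg hθ n _)] using hθ_int n

theorem QANorm_le_ofReal_mul_eLpNorm {φ ψ : ℝ → ℝ} (hφ : IsPhi φ) (hψ : IsPsi ψ) {C : ℝ}
    (hC0 : 0 < C) (hC : ∀ t : ℝ, 0 ≤ t → t ≤ 1 → φ t ≤ C * t) {f : ℝ → ℝ}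
    (hf : AEMeasurable f μ01) :
    QANorm φ ψ f ≤ ENNReal.ofReal (2 * (ψ 1 * C)) * eLpNorm f 1 μ01 := by
  have hψ1 : 0 < ψ 1 := hψ.pos 1 one_pos
  rcases eq_or_ne (eLpNorm f 1 μ01) ⊤ with hfin | hfin
  · rw [hfin, ENNReal.mul_top (ENNReal.ofReal_pos.2 (by positivity)).ne']
    exact le_top
  obtain ⟨g, hg, hgA⟩ := exists_admissible_eLpNorm_le hf hfin
  calc QANorm φ ψ f ≤ seqCost φ ψ g := iInf₂_le g hg
    _ ≤ ENNReal.ofReal (ψ 1 * C) * eLpNorm f 1 μ01 * 2 :=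
        seqCost_le_of_eLpNorm_le hφ hψ hC hg.1 hg.2.1 hgA
    _ = ENNReal.ofReal (2 * (ψ 1 * C)) * eLpNorm f 1 μ01 := by
        rw [ENNReal.ofReal_mul zero_le_two, ENNReal.ofReal_ofNat]
        ring

lemma eLpNorm_indicator_Icc {t : ℝ} (ht1 : t ≤ 1) :
    eLpNorm ((Icc 0 t).indicator fun _ => (1 : ℝ)) 1 μ01 = ENNReal.ofReal t := by
  simp [eLpNorm_indicator_const measurableSet_Icc one_ne_zero ENNReal.one_ne_top, μ01_Icc ht1]

lemma ofReal_mul_le_QANorm_indicator_Icc {φ ψ : ℝ → ℝ} (hφ : IsPhi φ) (hψ : IsPsi ψ) {t : ℝ}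
    (ht : 0 < t) (ht1 : t ≤ 1) :
    ENNReal.ofReal (ψ 1 * φ t) ≤ QANorm φ ψ ((Icc 0 t).indicator fun _ => 1) := by
  have hφt := hφ.nonneg ht.le ht1
  have hψ1 := hψ.pos 1 one_pos
  have h := ofReal_mul_setLIntegral_le_QANorm hφ hψ ht ht1 ((Icc 0 t).indicator fun _ => 1)
  rwa [setLIntegral_congr_fun (g := fun _ => 1) measurableSet_Icc fun x hx => by simp [hx],
    setLIntegral_one, μ01_Icc ht1, ← ENNReal.ofReal_mul (by positivity), mul_assoc,
    div_mul_cancel₀ _ ht.ne'] at h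

lemma ofReal_mul_eLpNorm_le_QANorm {φ ψ : ℝ → ℝ} (hφ : IsPhi φ) (hψ : IsPsi ψ) (f : ℝ → ℝ) :
    ENNReal.ofReal (ψ 1 * φ 1) * eLpNorm f 1 μ01 ≤ QANorm φ ψ f := by
  simpa [eLpNorm_one_eq_setLIntegral_Icc] using
    ofReal_mul_setLIntegral_le_QANorm hφ hψ one_pos le_rfl f

theorem le_mul_of_QANorm_le {φ ψ : ℝ → ℝ} (hφ : IsPhi φ) (hψ : IsPsi ψ) {K : ℝ} (hK : 0 ≤ K)
    (hKf : ∀ f : ℝ → ℝ, AEMeasurable f μ01 → QANorm φ ψ f ≤ ENNReal.ofReal K * eLpNorm f 1 μ01)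
    {t : ℝ} (ht0 : 0 ≤ t) (ht1 : t ≤ 1) : φ t ≤ K / ψ 1 * t := by
  rcases ht0.eq_or_lt with rfl | ht
  · simp [hφ.zero]
  have h := (ofReal_mul_le_QANorm_indicator_Icc hφ hψ ht ht1).trans
    (hKf _ (measurable_const.indicator measurableSet_Icc).aemeasurable)
  rw [eLpNorm_indicator_Icc ht1, ← ENNReal.ofReal_mul hK,
    ENNReal.ofReal_le_ofReal_iff (by positivity)] at h
  rw [div_mul_eq_mul_div, le_div_iff₀ (hψ.pos 1 one_pos)]
  linarith

/-- `QA_{φ,ψ} = L¹` (with equivalent norms) if and only if `φ` is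
equivalent to the identity, i.e. `φ(t) ≤ C t` on `[0,1]` for some `C > 0`
(the converse inequality `φ(1) t ≤ φ(t)` being automatic from concavity). -/
theorem stmt9 {φ ψ : ℝ → ℝ} (hφ : IsPhi φ) (hψ : IsPsi ψ) :
    (∃ K : ℝ, 0 < K ∧ ∀ f : ℝ → ℝ, AEMeasurable f μ01 →
      ENNReal.ofReal K⁻¹ * eLpNorm f 1 μ01 ≤ QANorm φ ψ f ∧
      QANorm φ ψ f ≤ ENNReal.ofReal K * eLpNorm f 1 μ01) ↔
    (∃ C : ℝ, 0 < C ∧ ∀ t : ℝ, 0 ≤ t → t ≤ 1 → φ t ≤ C * t) := by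
  have hψφ : 0 < ψ 1 * φ 1 := mul_pos (hψ.pos 1 one_pos) (hφ.pos 1 one_pos le_rfl)
  constructor
  · rintro ⟨K, hK, hKf⟩
    exact ⟨K / ψ 1, div_pos hK (hψ.pos 1 one_pos), fun t =>
      le_mul_of_QANorm_le hφ hψ hK.le (fun f hf => (hKf f hf).2)⟩
  · rintro ⟨C, hC0, hC⟩
    refine ⟨max (2 * (ψ 1 * C)) (ψ 1 * φ 1)⁻¹, lt_max_of_lt_right (inv_pos.2 hψφ),
      fun f hf => ⟨?_, ?_⟩⟩
    · refine le_trans ?_ (ofReal_mul_eLpNorm_le_QANorm hφ hψ f)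
      gcongr
      exact inv_le_of_inv_le₀ hψφ (le_max_right _ _)
    · refine (QANorm_le_ofReal_mul_eLpNorm hφ hψ hC0 hC hf).trans ?_
      gcongr
      exact le_max_left _ _
end
end
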